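/- Let J ⊂ K[x_1,...,x_n] be an Artinian almost revlex ideal with Hilbert function H, and let r_s = min{t : x_{n-s}^{t+1} ∈ J} for s ≥ 0. If r_1 < r_0, then ΔH(t) = H(t) - H(t-1) ≤ 0 for every t with r_1 < t ≤ r_0. -/
import Mathlib


open Finset

/-- Total degree of a monomial (exponent vector). -/
def mdeg {n : ℕ} (α : Fin n →₀ ℕ) : ℕ := α.sum fun _ e => e

/-- A set of exponent vectors is the set of monomials of a monomial ideal. -/
def IsMonIdeal {n : ℕ} (S : Set (Fin n →₀ ℕ)) : Prop :=
  ∀ α ∈ S, ∀ β : Fin n →₀ ℕ, α + β ∈ S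

/-- `α` is a minimal monomial generator of the monomial ideal with monomials `S`. -/
def MinGen {n : ℕ} (S : Set (Fin n →₀ ℕ)) (α : Fin n →₀ ℕ) : Prop :=
  α ∈ S ∧ ∀ β ∈ S, β ≤ α → β = α

/-- Stable monomial ideal (variables ordered `x_1 ≻ ⋯ ≻ x_n`, i.e. index `0` largest). -/
def IsStable {n : ℕ} (S : Set (Fin n →₀ ℕ)) : Prop :=
  ∀ α ∈ S, ∀ m ∈ α.support, (∀ k ∈ α.support, k ≤ m) →
    ∀ i : Fin n, i < m → α - Finsupp.single m 1 + Finsupp.single i 1 ∈ S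

def IsStronglyStable {n : ℕ} (S : Set (Fin n →₀ ℕ)) : Prop :=
  ∀ α ∈ S, ∀ i ∈ α.support, ∀ j : Fin n, j < i →
    α - Finsupp.single i 1 + Finsupp.single j 1 ∈ S

/-- `drlLT α β` : `α` is smaller than `β` in degrevlex with `x_1 ≻ ⋯ ≻ x_n`. -/
def drlLT {n : ℕ} (α β : Fin n →₀ ℕ) : Prop :=
  mdeg α < mdeg β ∨ (mdeg α = mdeg β ∧ ∃ i : Fin n, β i < α i ∧ ∀ j : Fin n, i < j → α j = β j)

def IsAlmostRevLex {n : ℕ} (S : Set (Fin n →₀ ℕ)) : Prop :=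
  IsMonIdeal S ∧ ∀ α, MinGen S α → ∀ β : Fin n →₀ ℕ, mdeg β = mdeg α → drlLT α β → β ∈ S

/-- Combinatorial Hilbert function of `R/J`: number of degree-`t` monomials outside `S`. -/
noncomputable def hilbC {n : ℕ} (S : Set (Fin n →₀ ℕ)) (t : ℕ) : ℕ :=
  {α : Fin n →₀ ℕ | mdeg α = t ∧ α ∉ S}.ncard

/-- `fdiff H s t` is `Δ^s H (t)` with the convention `Δ^s H (0) = 1` for `s ≥ 1`. -/
def fdiff (H : ℕ → ℕ) : ℕ → ℕ → ℤ
  | 0, t => H t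
  | _+1, 0 => 1
  | s+1, t+1 => fdiff H s (t+1) - fdiff H s t

lemma mdeg_single' {n : ℕ} (i : Fin n) (k : ℕ) : mdeg (Finsupp.single i k) = k := by
  simp [mdeg, Finsupp.sum_single_index]

lemma mdeg_add' {n : ℕ} (a b : Fin n →₀ ℕ) : mdeg (a + b) = mdeg a + mdeg b := by
  simp [mdeg, Finsupp.sum_add_index']

lemma mdeg_eq_sum {n : ℕ} (a : Fin n →₀ ℕ) : mdeg a = ∑ i, a i := by
  rw [mdeg, Finsupp.sum_fintype]; intro; rfl

lemma apply_le_mdeg {n : ℕ} (a : Fin n →₀ ℕ) (i : Fin n) : a i ≤ mdeg a := by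
  rw [mdeg_eq_sum]
  exact Finset.single_le_sum (fun _ _ => Nat.zero_le _) (mem_univ i)

/-- Every monomial of degree `r1+1` not involving the last variable lies in `S`. -/
lemma key_base {n : ℕ} (S : Set (Fin n →₀ ℕ)) (hS : IsAlmostRevLex S)
    (h0 : (0 : Fin n →₀ ℕ) ∉ S) (r1 : ℕ) (m l : Fin n)
    (hm : (m : ℕ) = n - 2) (hl : (l : ℕ) = n - 1) (hml : m ≠ l)
    (hr1 : Finsupp.single m (r1 + 1) ∈ S ∧
      ∀ t, Finsupp.single m (t + 1) ∈ S → r1 ≤ t)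
    (β : Fin n →₀ ℕ) (hd : mdeg β = r1 + 1) (hz : β l = 0) : β ∈ S := by
  set α : Fin n →₀ ℕ := Finsupp.single m (r1 + 1) with hα
  have hgen : MinGen S α := by
    refine ⟨hr1.1, fun γ hγ hle => ?_⟩
    have hle' : ∀ i, γ i ≤ α i := fun i => hle i
    have hsingle : γ = Finsupp.single m (γ m) := by
      ext i
      by_cases hi : i = m
      · simp [hi]
      · have := hle' i
        simp [hα, Finsupp.single_apply, Ne.symm hi, hi] at this ⊢
        omega
    rcases Nat.eq_zero_or_pos (γ m) with h | h
    · exfalso; apply h0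
      have : γ = 0 := by rw [hsingle, h, Finsupp.single_zero]
      rwa [this] at hγ
    · obtain ⟨d, hdd⟩ : ∃ d, γ m = d + 1 := ⟨γ m - 1, by omega⟩
      have hdle : r1 ≤ d := hr1.2 d (by rw [← hdd, ← hsingle]; exact hγ)
      have hub : γ m ≤ r1 + 1 := by
        have := hle' m; simpa [hα, Finsupp.single_apply] using this
      have : γ m = r1 + 1 := by omega
      rw [hsingle, this]
  by_cases hcase : β m = r1 + 1
  · -- then β = α
    have hsum : ∑ i, β i = r1 + 1 := by rw [← mdeg_eq_sum, hd]
    have hz' : ∀ i, i ≠ m → β i = 0 := by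
      intro i hi
      have h1 : β m + ∑ j ∈ univ.erase m, β j = r1 + 1 := by
        rw [Finset.add_sum_erase univ β (mem_univ m)]; exact hsum
      have h2 : ∑ j ∈ univ.erase m, β j = 0 := by omega
      exact (Finset.sum_eq_zero_iff.mp h2) i (by simp [hi])
    have : β = α := by
      ext i
      by_cases hi : i = m
      · simp [hi, hα, Finsupp.single_apply, hcase]
      · simp [hα, Finsupp.single_apply, hi, Ne.symm hi, hz' i hi]
    rw [this]; exact hr1.1
  · have hub : β m ≤ r1 + 1 := by rw [← hd]; exact apply_le_mdeg β m
    apply hS.2 α hgen β (by rw [hd, hα, mdeg_single'])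
    refine Or.inr ⟨by rw [hd, hα, mdeg_single'], m, ?_, ?_⟩
    · have : α m = r1 + 1 := by simp [hα, Finsupp.single_apply]
      omega
    · intro j hj
      have hjl : j = l := by
        have h1 : (m : ℕ) < j := hj
        have h2 : (j : ℕ) < n := j.isLt
        have h3 : 1 ≤ n := by omega
        rw [Fin.ext_iff, hl]; omega
      rw [hjl]
      have : α l = 0 := by simp [hα, Finsupp.single_apply, hml]
      rw [this, hz]

/-- Every monomial of degree `≥ r1+1` not involving the last variable lies in `S`. -/
lemma key_ge {n : ℕ} (S : Set (Fin n →₀ ℕ)) (hS : IsAlmostRevLex S)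
    (h0 : (0 : Fin n →₀ ℕ) ∉ S) (r1 : ℕ) (m l : Fin n)
    (hm : (m : ℕ) = n - 2) (hl : (l : ℕ) = n - 1) (hml : m ≠ l)
    (hr1 : Finsupp.single m (r1 + 1) ∈ S ∧
      ∀ t, Finsupp.single m (t + 1) ∈ S → r1 ≤ t) :
    ∀ k (β : Fin n →₀ ℕ), mdeg β = r1 + 1 + k → β l = 0 → β ∈ S := by
  intro k
  induction k with
  | zero => exact fun β hd hz => key_base S hS h0 r1 m l hm hl hml hr1 β hd hz
  | succ k ih =>
    intro β hd hz
    have hβne : β ≠ 0 := by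
      intro h; rw [h] at hd; simp [mdeg] at hd
    obtain ⟨i, hi⟩ := Finsupp.support_nonempty_iff.mpr hβne
    have hipos : 1 ≤ β i := Nat.one_le_iff_ne_zero.mpr (Finsupp.mem_support_iff.mp hi)
    have hle : Finsupp.single i 1 ≤ β := Finsupp.single_le_iff.mpr hipos
    have hcan : β - Finsupp.single i 1 + Finsupp.single i 1 = β := tsub_add_cancel_of_le hle
    have hd' : mdeg (β - Finsupp.single i 1) = r1 + 1 + k := by
      have := congrArg mdeg hcan
      rw [mdeg_add', mdeg_single', hd] at this
      omega
    have hz' : ((β - Finsupp.single i 1 : Fin n →₀ ℕ)) l = 0 := by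
      rw [Finsupp.tsub_apply]
      simp [hz]
    have := hS.1 _ (ih _ hd' hz') (Finsupp.single i 1)
    rwa [hcan] at this

/-- Let `J` be an Artinian almost revlex ideal in `K[x_1,…,x_n]` (`n ≥ 2`) with Hilbert
function `H`, and let `r_s = min{t : x_{n-s}^{t+1} ∈ J}` (here `x_{n-s}` is the variable of
`0`-based index `n-1-s`).  If `r_1 < r_0`, then `ΔH(t) = H(t) - H(t-1) ≤ 0` for every
`r_1 < t ≤ r_0`. -/
theorem deltaH_nonpos_between_reduction_numbers {n : ℕ} (hn : 2 ≤ n)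
    (S : Set (Fin n →₀ ℕ)) (hS : IsAlmostRevLex S)
    (hArt : {α : Fin n →₀ ℕ | α ∉ S}.Finite)
    (r0 r1 : ℕ)
    (hr0 : Finsupp.single (⟨n - 1, by omega⟩ : Fin n) (r0 + 1) ∈ S ∧
      ∀ t, Finsupp.single (⟨n - 1, by omega⟩ : Fin n) (t + 1) ∈ S → r0 ≤ t)
    (hr1 : Finsupp.single (⟨n - 2, by omega⟩ : Fin n) (r1 + 1) ∈ S ∧
      ∀ t, Finsupp.single (⟨n - 2, by omega⟩ : Fin n) (t + 1) ∈ S → r1 ≤ t)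
    (hlt : r1 < r0) :
    ∀ t, r1 < t → t ≤ r0 → hilbC S t ≤ hilbC S (t - 1) := by
  intro t ht1 ht0
  by_cases h0 : (0 : Fin n →₀ ℕ) ∈ S
  · have hall : ∀ α : Fin n →₀ ℕ, α ∈ S := by
      intro α
      have := hS.1 0 h0 α
      rwa [zero_add] at this
    have : {α : Fin n →₀ ℕ | mdeg α = t ∧ α ∉ S} = ∅ := by
      ext α; simp [hall α]
    rw [hilbC, this]
    simp
  · set m : Fin n := ⟨n - 2, by omega⟩ with hm
    set l : Fin n := ⟨n - 1, by omega⟩ with hl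
    have hmv : (m : ℕ) = n - 2 := rfl
    have hlv : (l : ℕ) = n - 1 := rfl
    have hml : m ≠ l := by
      intro h
      have h2 := congrArg Fin.val h
      rw [hmv, hlv] at h2
      omega
    set e : Fin n →₀ ℕ := Finsupp.single l 1 with he
    have hme : mdeg e = 1 := by rw [he, mdeg_single']
    have hpos : ∀ α : Fin n →₀ ℕ, mdeg α = t → α ∉ S → 1 ≤ α l := by
      intro α hd hns
      by_contra h
      have hz : α l = 0 := by omega
      exact hns (key_ge S hS h0 r1 m l hmv hlv hml hr1 (t - (r1 + 1)) α (by omega) hz)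
    refine Set.ncard_le_ncard_of_injOn (fun α => α - e) ?_ ?_
      (hArt.subset fun x hx => hx.2)
    · rintro α ⟨hd, hns⟩
      show mdeg (α - e) = t - 1 ∧ α - e ∉ S
      have hle : e ≤ α := Finsupp.single_le_iff.mpr (hpos α hd hns)
      have hcan : α - e + e = α := tsub_add_cancel_of_le hle
      constructor
      · have h2 := congrArg mdeg hcan
        rw [mdeg_add', hme, hd] at h2
        omega
      · intro h
        have := hS.1 _ h e
        rw [hcan] at this
        exact hns this
    · rintro α ⟨hdα, hnsα⟩ β ⟨hdβ, hnsβ⟩ hfe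
      simp only at hfe
      have hleα : e ≤ α := Finsupp.single_le_iff.mpr (hpos α hdα hnsα)
      have hleβ : e ≤ β := Finsupp.single_le_iff.mpr (hpos β hdβ hnsβ)
      calc α = α - e + e := (tsub_add_cancel_of_le hleα).symm
        _ = β - e + e := by rw [hfe]
        _ = β := tsub_add_cancel_of_le hleβ
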